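/- Let 1 ≤ l < n, r, r' ∈ Z_n and η ∈ P^1(k). Then for all s ≥ 1, V(1,r) ⊗ M_s(l,r',η) ≅ M_s(l, r+r', η). -/

import Mathlib

open scoped TensorProduct
open MulOpposite

noncomputable section

/-- The Drinfeld double `H_n(1,q)` of the Taft algebra `H_n(q)`, presented by generators
`a, b, c, d` and relations, together with its Hopf algebra structure data. -/
structure TaftDouble (k : Type) [Field k] where
  n : ℕ
  hn : 2 < n
  q : k
  hq : IsPrimitiveRoot q n
  H : Type
  [ringH : Ring H]
  [algH : Algebra k H]
  a : H
  b : H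
  c : H
  d : H
  gen : Algebra.adjoin k {a, b, c, d} = ⊤
  finDim : Module.finrank k H = n ^ 4
  rel_ba : b * a = q • (a * b)
  rel_db : d * b = q • (b * d)
  rel_ca : c * a = q • (a * c)
  rel_dc : d * c = q • (c * d)
  rel_bc : b * c = c * b
  rel_an : a ^ n = 0
  rel_bn : b ^ n = 1
  rel_cn : c ^ n = 1
  rel_dn : d ^ n = 0
  rel_da : d * a - q • (a * d) = 1 - b * c
  comul : H →ₐ[k] H ⊗[k] H
  counit : H →ₐ[k] k
  antipode : H →ₐ[k] Hᵐᵒᵖ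
  comul_a : comul a = a ⊗ₜ[k] b + 1 ⊗ₜ[k] a
  comul_b : comul b = b ⊗ₜ[k] b
  comul_c : comul c = c ⊗ₜ[k] c
  comul_d : comul d = d ⊗ₜ[k] c + 1 ⊗ₜ[k] d
  counit_a : counit a = 0
  counit_b : counit b = 1
  counit_c : counit c = 1
  counit_d : counit d = 0
  antipode_a : antipode a = op (-(a * b ^ (n - 1)))
  antipode_b : antipode b = op (b ^ (n - 1))
  antipode_c : antipode c = op (c ^ (n - 1))
  antipode_d : antipode d = op (-(d * c ^ (n - 1)))

variable {k : Type} [Field k]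

instance (S : TaftDouble k) : Ring S.H := S.ringH
instance (S : TaftDouble k) : Algebra k S.H := S.algH

/-- `c(t)`, the integer part of `(t+1)/2`. -/
def cc (t : ℕ) : ℕ := (t + 1) / 2

/-- Extension of a finitely indexed family by zero. -/
def fe {M : Type} [Zero M] {N : ℕ} (v : Fin N → M) (t : ℕ) : M :=
  if h : t < N then v ⟨t, h⟩ else 0

/-- Extension of a doubly indexed family by zero. -/
def fe2 {M : Type} [Zero M] {N1 N2 : ℕ} (v : Fin N1 × Fin N2 → M) (t1 t2 : ℕ) : M :=
  if h : t1 < N1 ∧ t2 < N2 then v (⟨t1, h.1⟩, ⟨t2, h.2⟩) else 0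

/-- Rescaling of a point of `P^1(k) = k ∪ {∞}`, with the convention `α · ∞ = ∞`. -/
def pscale (α : k) (η : WithTop k) : WithTop k := η.map (fun x => α * x)

namespace TaftDouble

variable (S : TaftDouble k)

/-- `q^r` for `r ∈ ℤ_n` (well defined since `q^n = 1`). -/
def qpow (r : ZMod S.n) : k := S.q ^ r.val

/-- The `q`-integer `(i)_q = 1 + q + ⋯ + q^{i-1}`. -/
def qint (i : ℕ) : k := ∑ j ∈ Finset.range i, S.q ^ j

/-- `α_i(l) = (i)_q (1 - q^{i-l})`. -/
def alphaq (i l : ℕ) : k := S.qint i * (1 - S.q ^ ((i : ℤ) - (l : ℤ)))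

/-- A bundled finite-dimensional left module over `H_n(1,q)`. -/
structure SMod where
  carrier : Type
  [acg : AddCommGroup carrier]
  [modH : Module S.H carrier]
  [modk : Module k carrier]
  [tower : IsScalarTower k S.H carrier]

attribute [instance] SMod.acg SMod.modH SMod.modk SMod.tower

variable {S}

/-- Bundle a module. -/
def SMod.mk' (S : TaftDouble k) (T : Type) [AddCommGroup T] [Module S.H T] [Module k T]
    [IsScalarTower k S.H T] : SMod S := ⟨T⟩

/-- The submodule `W` of `X`, viewed as a bundled module. -/
def SMod.sub (X : SMod S) (W : Submodule S.H X.carrier) : SMod S where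
  carrier := W

/-- `X` satisfies `IsV l r` iff `X ≅ V(l,r)`, the simple module with standard basis
`v_1, …, v_l` (here indexed by `Fin l`, shifted by one). -/
def IsV (S : TaftDouble k) (l : ℕ) (r : ZMod S.n) (X : SMod S) : Prop :=
  ∃ v : Module.Basis (Fin l) k X.carrier,
    (∀ i : Fin l, S.a • (v i : X.carrier) = fe v ((i : ℕ) + 1)) ∧
    (∀ i : Fin l, S.d • (v i : X.carrier) = S.alphaq (i : ℕ) l • fe v ((i : ℕ) - 1)) ∧
    (∀ i : Fin l, S.b • (v i : X.carrier) = S.qpow (r + ((i : ℕ) : ZMod S.n)) • v i) ∧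
    (∀ i : Fin l, S.c • (v i : X.carrier)
      = S.qpow (((i : ℕ) : ZMod S.n) + 1 - r - (l : ZMod S.n)) • v i)

/-- `X ≅ P(l,r)` for `1 ≤ l < n`: the projective cover of `V(l,r)`, given by its
standard basis `v_1, …, v_{2n}` (indexed here by `Fin (2n)`, shifted by one). -/
def IsPexp (S : TaftDouble k) (l : ℕ) (r : ZMod S.n) (X : SMod S) : Prop :=
  ∃ v : Module.Basis (Fin (2 * S.n)) k X.carrier,
    (∀ i : Fin (2 * S.n), S.a • (v i : X.carrier) =
      if (i : ℕ) = S.n - 1 then 0 else fe v ((i : ℕ) + 1)) ∧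
    (∀ i : Fin (2 * S.n), S.b • (v i : X.carrier) =
      if (i : ℕ) < S.n then S.qpow (r + ((i : ℕ) : ZMod S.n)) • v i
      else S.qpow (r + (l : ZMod S.n) + ((i : ℕ) : ZMod S.n)) • v i) ∧
    (∀ i : Fin (2 * S.n), S.c • (v i : X.carrier) =
      if (i : ℕ) < S.n then
        S.qpow (((i : ℕ) : ZMod S.n) + 1 - (l : ZMod S.n) - r) • v i
      else S.qpow (((i : ℕ) : ZMod S.n) + 1 - r) • v i) ∧
    (∀ i : Fin (2 * S.n), S.d • (v i : X.carrier) =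
      if (i : ℕ) ≤ l then
        S.q ^ (i : ℕ) • fe v (2 * S.n - l - 1 + (i : ℕ))
          + S.alphaq (i : ℕ) l • fe v ((i : ℕ) - 1)
      else if (i : ℕ) ≤ S.n then
        S.alphaq ((i : ℕ) - l) (S.n - l) • fe v ((i : ℕ) - 1)
      else if (i : ℕ) ≤ 2 * S.n - l then
        S.alphaq ((i : ℕ) - S.n) (S.n - l) • fe v ((i : ℕ) - 1)
      else S.alphaq ((i : ℕ) + l - 2 * S.n) l • fe v ((i : ℕ) - 1))

/-- `X ≅ P(l,r)`, with the convention `P(n,r) = V(n,r)`. -/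
def IsP (S : TaftDouble k) (l : ℕ) (r : ZMod S.n) (X : SMod S) : Prop :=
  if l = S.n then S.IsV S.n r X else S.IsPexp l r X

/-- `X ≅ M_s(l,r,η)` for `η ∈ k`: the band module, via its standard basis
`v_{i,j}` (`1 ≤ i ≤ n`, `1 ≤ j ≤ s`), indexed here by `Fin n × Fin s` (shifted by one). -/
def IsBandFin (S : TaftDouble k) (s l : ℕ) (r : ZMod S.n) (η : k) (X : SMod S) : Prop :=
  ∃ v : Module.Basis (Fin S.n × Fin s) k X.carrier,
    (∀ p : Fin S.n × Fin s, S.a • (v p : X.carrier) = fe2 v ((p.1 : ℕ) + 1) (p.2 : ℕ)) ∧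
    (∀ p : Fin S.n × Fin s, S.d • (v p : X.carrier) =
      if (p.1 : ℕ) = 0 then
        (if (p.2 : ℕ) = 0 then 0 else fe2 v (S.n - 1) ((p.2 : ℕ) - 1))
          + (η * S.q ^ l) • fe2 v (S.n - 1) (p.2 : ℕ)
      else if (p.1 : ℕ) ≤ S.n - l then
        S.alphaq (p.1 : ℕ) (S.n - l) • fe2 v ((p.1 : ℕ) - 1) (p.2 : ℕ)
      else S.alphaq ((p.1 : ℕ) + l - S.n) l • fe2 v ((p.1 : ℕ) - 1) (p.2 : ℕ)) ∧
    (∀ p : Fin S.n × Fin s, S.b • (v p : X.carrier) =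
      S.qpow (r + (l : ZMod S.n) + ((p.1 : ℕ) : ZMod S.n)) • v p) ∧
    (∀ p : Fin S.n × Fin s, S.c • (v p : X.carrier) =
      S.qpow (((p.1 : ℕ) : ZMod S.n) + 1 - r) • v p)

/-- `X ≅ M_s(l,r,∞)`: the band module with parameter `∞`, via its standard basis. -/
def IsBandInf (S : TaftDouble k) (s l : ℕ) (r : ZMod S.n) (X : SMod S) : Prop :=
  ∃ v : Module.Basis (Fin S.n × Fin s) k X.carrier,
    (∀ p : Fin S.n × Fin s, S.a • (v p : X.carrier) =
      if (p.1 : ℕ) = S.n - l - 1 then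
        (if (p.2 : ℕ) = 0 then 0 else fe2 v ((p.1 : ℕ) + 1) ((p.2 : ℕ) - 1))
      else fe2 v ((p.1 : ℕ) + 1) (p.2 : ℕ)) ∧
    (∀ p : Fin S.n × Fin s, S.d • (v p : X.carrier) =
      if (p.1 : ℕ) = 0 then fe2 v (S.n - 1) (p.2 : ℕ)
      else if (p.1 : ℕ) ≤ S.n - l then
        S.alphaq (p.1 : ℕ) (S.n - l) • fe2 v ((p.1 : ℕ) - 1) (p.2 : ℕ)
      else S.alphaq ((p.1 : ℕ) + l - S.n) l • fe2 v ((p.1 : ℕ) - 1) (p.2 : ℕ)) ∧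
    (∀ p : Fin S.n × Fin s, S.b • (v p : X.carrier) =
      S.qpow (r + (l : ZMod S.n) + ((p.1 : ℕ) : ZMod S.n)) • v p) ∧
    (∀ p : Fin S.n × Fin s, S.c • (v p : X.carrier) =
      S.qpow (((p.1 : ℕ) : ZMod S.n) + 1 - r) • v p)

/-- `X ≅ M_s(l,r,η)` for `η ∈ P^1(k) = k ∪ {∞}`. -/
def IsBand (S : TaftDouble k) (s l : ℕ) (r : ZMod S.n) (η : WithTop k) (X : SMod S) : Prop :=
  WithTop.recTopCoe (S.IsBandInf s l r X) (fun x => S.IsBandFin s l r x X) η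

/-- `X` is an internal direct sum of `c` copies of `P(l,r)`. -/
def IsProjSum (S : TaftDouble k) (c : ℕ) (l : ℕ) (r : ZMod S.n) (X : SMod S) : Prop :=
  ∃ W : Fin c → Submodule S.H X.carrier,
    DirectSum.IsInternal W ∧ ∀ i, S.IsP l r (X.sub (W i))

/-- `X ≅ Ω^m V(l,r)` for `m ≥ 0`: defined recursively, `Ω^{m+1} V(l,r)` being the kernel of
the projective cover `(m+1)P(…) → Ω^m V(l,r)` from the minimal projective resolution. -/
def IsOmPos (S : TaftDouble k) : ℕ → ℕ → ZMod S.n → SMod S → Prop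
  | 0, l, r, X => S.IsV l r X
  | m + 1, l, r, X =>
    ∃ X' Q : SMod S,
      S.IsOmPos m l r X' ∧
      S.IsProjSum (m + 1) (if m % 2 = 0 then l else S.n - l)
        (if m % 2 = 0 then r else r + (l : ZMod S.n)) Q ∧
      ∃ f : Q.carrier →ₗ[S.H] X'.carrier,
        Function.Surjective f ∧
        (∀ N : Submodule S.H Q.carrier, N ⊔ LinearMap.ker f = ⊤ → N = ⊤) ∧
        Nonempty (X.carrier ≃ₗ[S.H] LinearMap.ker f)

/-- `X ≅ Ω^{-m} V(l,r)` for `m ≥ 0`: defined recursively, `Ω^{-(m+1)} V(l,r)` being the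
cokernel of the injective envelope `Ω^{-m} V(l,r) → (m+1)P(…)` from the minimal injective
resolution. -/
def IsOmNeg (S : TaftDouble k) : ℕ → ℕ → ZMod S.n → SMod S → Prop
  | 0, l, r, X => S.IsV l r X
  | m + 1, l, r, X =>
    ∃ X' Q : SMod S,
      S.IsOmNeg m l r X' ∧
      S.IsProjSum (m + 1) (if m % 2 = 0 then l else S.n - l)
        (if m % 2 = 0 then r else r + (l : ZMod S.n)) Q ∧
      ∃ f : X'.carrier →ₗ[S.H] Q.carrier,
        Function.Injective f ∧
        (∀ N : Submodule S.H Q.carrier, N ⊓ LinearMap.range f = ⊥ → N = ⊥) ∧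
        Nonempty (X.carrier ≃ₗ[S.H] (Q.carrier ⧸ LinearMap.range f))

/-- `X ≅ Ω^m V(l,r)` for `m ∈ ℤ`. -/
def IsOm (S : TaftDouble k) (m : ℤ) (l : ℕ) (r : ZMod S.n) (X : SMod S) : Prop :=
  if 0 ≤ m then S.IsOmPos m.toNat l r X else S.IsOmNeg (-m).toNat l r X

/-- Descriptions of the indecomposable modules over `H_n(1,q)`:
simples `V(l,r)`, projectives `P(l,r)`, string modules `Ω^m V(l,r)`,
and band modules `M_s(l,r,η)`. -/
inductive Desc (S : TaftDouble k) where
  | V (l : ℕ) (r : ZMod S.n)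
  | P (l : ℕ) (r : ZMod S.n)
  | Om (m : ℤ) (l : ℕ) (r : ZMod S.n)
  | B (s l : ℕ) (r : ZMod S.n) (η : WithTop k)

/-- `X` is (isomorphic to) the indecomposable module described by `D`. -/
def Matches (S : TaftDouble k) (D : Desc S) (X : SMod S) : Prop :=
  match D with
  | Desc.V l r => S.IsV l r X
  | Desc.P l r => S.IsP l r X
  | Desc.Om m l r => S.IsOm m l r X
  | Desc.B s l r η => S.IsBand s l r η X

/-- `X` decomposes as the direct sum of the indecomposable modules described by
the family `D`. -/
def DecompAs (S : TaftDouble k) (X : SMod S) {ι : Type} (D : ι → Desc S) : Prop :=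
  ∃ W : ι → Submodule S.H X.carrier,
    (letI := Classical.decEq ι; DirectSum.IsInternal W) ∧
    ∀ i, S.Matches (D i) (X.sub (W i))

/-- The representation of `H_n(1,q)` on a module. -/
def rep (X : SMod S) : S.H →ₐ[k] Module.End k X.carrier :=
  Algebra.lsmul k k X.carrier

/-- The representation of `H_n(1,q)` on the tensor product of two modules, via the
comultiplication. -/
def tensRep (X Y : SMod S) : S.H →ₐ[k] Module.End k (X.carrier ⊗[k] Y.carrier) :=
  (Module.endTensorEndAlgHom (R := k) (S := k) (A := k)
      (M := X.carrier) (N := Y.carrier)).comp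
    ((Algebra.TensorProduct.map (rep X) (rep Y)).comp S.comul)

/-- The carrier of the tensor product of two modules. -/
def TensC (X Y : SMod S) : Type := X.carrier ⊗[k] Y.carrier

instance (X Y : SMod S) : AddCommGroup (TensC X Y) :=
  inferInstanceAs (AddCommGroup (X.carrier ⊗[k] Y.carrier))

instance (X Y : SMod S) : Module k (TensC X Y) :=
  inferInstanceAs (Module k (X.carrier ⊗[k] Y.carrier))

/-- The `H_n(1,q)`-module structure on the tensor product `X ⊗_k Y`, via the
comultiplication. -/
instance (X Y : SMod S) : Module S.H (TensC X Y) :=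
  letI : Module (Module.End k (X.carrier ⊗[k] Y.carrier)) (TensC X Y) :=
    inferInstanceAs (Module (Module.End k (X.carrier ⊗[k] Y.carrier))
      (X.carrier ⊗[k] Y.carrier))
  Module.compHom (TensC X Y) (tensRep X Y).toRingHom

instance (X Y : SMod S) : IsScalarTower k S.H (TensC X Y) :=
  ⟨fun r h m => LinearMap.congr_fun (map_smul (tensRep X Y) r h) m⟩

/-- The tensor product of two modules over `H_n(1,q)`, with action induced by the
comultiplication. -/
def SMod.tens (X Y : SMod S) : SMod S := ⟨TensC X Y⟩

/-- The representation of `H_n(1,q)` on the dual of a module, via the antipode. -/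
def dualRep (X : SMod S) : S.H →ₐ[k] Module.End k (Module.Dual k X.carrier) where
  toFun h := ((rep X) (unop (S.antipode h))).dualMap
  map_one' := by
    ext φ x
    simp
  map_mul' h₁ h₂ := by
    ext φ x
    simp [map_mul, Module.End.mul_apply, unop_mul]
  map_zero' := by
    ext φ x
    simp
  map_add' h₁ h₂ := by
    ext φ x
    simp [map_add, unop_add]
  commutes' r := by
    ext φ x
    simp [AlgHom.commutes, Module.algebraMap_end_apply]

/-- The carrier of the dual module. -/
def DualC (X : SMod S) : Type := Module.Dual k X.carrier

instance (X : SMod S) : AddCommGroup (DualC X) :=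
  inferInstanceAs (AddCommGroup (Module.Dual k X.carrier))

instance (X : SMod S) : Module k (DualC X) :=
  inferInstanceAs (Module k (Module.Dual k X.carrier))

/-- The `H_n(1,q)`-module structure on the dual `X^*`, with the action
`(h·f)(m) = f(S(h)·m)`. -/
instance (X : SMod S) : Module S.H (DualC X) :=
  letI : Module (Module.End k (Module.Dual k X.carrier)) (DualC X) :=
    inferInstanceAs (Module (Module.End k (Module.Dual k X.carrier))
      (Module.Dual k X.carrier))
  Module.compHom (DualC X) (dualRep X).toRingHom

instance (X : SMod S) : IsScalarTower k S.H (DualC X) :=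
  ⟨fun r h m => LinearMap.congr_fun (map_smul (dualRep X) r h) m⟩

/-- The dual module `X^* = Hom_k(X,k)` with the action `(h·f)(m) = f(S(h)·m)`. -/
def SMod.dual (X : SMod S) : SMod S := ⟨DualC X⟩

end TaftDouble

open TaftDouble


/-!
`V(1,r)` is spanned by a single vector `v` killed by `a` and `d`, on which `b` and `c` act
by `q^r` and `q^{-r}`. As `a` and `d` are `(b,1)`- and `(c,1)`-skew-primitive while `b` and
`c` are grouplike, `y ↦ v ⊗ y` is a linear isomorphism `Y ≅ V(1,r) ⊗ Y` commuting with `a`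
and `d` and rescaling `b` and `c` by `q^r` and `q^{-r}`. It carries the standard basis of
`M_s(l,r',η)` to a basis satisfying the defining relations of `M_s(l,r+r',η)`.
-/

namespace TaftDouble

variable {S : TaftDouble k}

lemma qpow_add (x y : ZMod S.n) : S.qpow (x + y) = S.qpow x * S.qpow y := by
  have : NeZero S.n := ⟨by have := S.hn; omega⟩
  rw [qpow, qpow, qpow, ZMod.val_add, ← pow_add]
  exact pow_eq_pow_of_modEq (Nat.mod_modEq _ _) S.hq.pow_eq_one

lemma fe2_basis_map {M N : Type} [AddCommGroup M] [Module k M] [AddCommGroup N] [Module k N]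
    {n₁ n₂ : ℕ} (w : Module.Basis (Fin n₁ × Fin n₂) k M) (e : M ≃ₗ[k] N)
    (i j : ℕ) : fe2 (w.map e) i j = e (fe2 w i j) := by
  unfold fe2
  split_ifs <;> simp

section Tensor

variable {X : SMod S} (v : Module.Basis (Fin 1) k X.carrier) (Y : SMod S)

def tensLeftEquiv : Y.carrier ≃ₗ[k] (X.tens Y).carrier :=
  (TensorProduct.lid k Y.carrier).symm ≪≫ₗ
    TensorProduct.congr (v.equivFun ≪≫ₗ LinearEquiv.funUnique (Fin 1) k k).symm
      (LinearEquiv.refl k Y.carrier)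

lemma tensLeftEquiv_apply (y : Y.carrier) :
    (tensLeftEquiv v Y y : X.carrier ⊗[k] Y.carrier) = v 0 ⊗ₜ y := by
  show (v.equivFun.trans (LinearEquiv.funUnique (Fin 1) k k)).symm 1 ⊗ₜ[k] y = v 0 ⊗ₜ y
  simp

variable {v Y}

lemma smul_tensLeftEquiv_of_comul_eq_add {h h₁ h₂ h₃ : S.H}
    (hc : S.comul h = h₁ ⊗ₜ[k] h₂ + 1 ⊗ₜ[k] h₃) (hv : h₁ • v 0 = 0) (y : Y.carrier) :
    h • tensLeftEquiv v Y y = tensLeftEquiv v Y (h₃ • y) := by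
  show tensRep X Y h (tensLeftEquiv v Y y) = tensLeftEquiv v Y (h₃ • y)
  simp [tensLeftEquiv_apply, tensRep, hc, Module.endTensorEndAlgHom_apply, rep, hv]

lemma smul_tensLeftEquiv_of_comul_eq_tmul {h h₁ h₂ : S.H} (hc : S.comul h = h₁ ⊗ₜ[k] h₂)
    {β : k} (hv : h₁ • v 0 = β • v 0) (y : Y.carrier) :
    h • tensLeftEquiv v Y y = β • tensLeftEquiv v Y (h₂ • y) := by
  show tensRep X Y h (tensLeftEquiv v Y y) = β • tensLeftEquiv v Y (h₂ • y)
  simp only [tensRep, rep, AlgHom.coe_comp, Function.comp_apply, hc,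
    Algebra.TensorProduct.map_tmul, Module.endTensorEndAlgHom_apply, tensLeftEquiv_apply,
    TensorProduct.AlgebraTensorModule.map_tmul, Algebra.lsmul_coe, hv,
    ← TensorProduct.smul_tmul']
  rfl

end Tensor

/-- `e` exhibits `Z` as `V(1,r) ⊗ Y`. -/
structure IsTwistEquiv (r : ZMod S.n) {Y Z : SMod S} (e : Y.carrier ≃ₗ[k] Z.carrier) :
    Prop where
  a_smul : ∀ y, S.a • e y = e (S.a • y)
  d_smul : ∀ y, S.d • e y = e (S.d • y)
  b_smul : ∀ y, S.b • e y = S.qpow r • e (S.b • y)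
  c_smul : ∀ y, S.c • e y = S.qpow (-r) • e (S.c • y)

namespace IsTwistEquiv

variable {r : ZMod S.n} {Y Z : SMod S} {e : Y.carrier ≃ₗ[k] Z.carrier}

lemma b_smul_of_eq (he : IsTwistEquiv r e) {t : ZMod S.n} {y : Y.carrier}
    (hy : S.b • y = S.qpow t • y) : S.b • e y = S.qpow (r + t) • e y := by
  rw [he.b_smul, hy, map_smul, smul_smul, qpow_add]

lemma c_smul_of_eq (he : IsTwistEquiv r e) {t : ZMod S.n} {y : Y.carrier}
    (hy : S.c • y = S.qpow t • y) : S.c • e y = S.qpow (t - r) • e y := by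
  rw [he.c_smul, hy, map_smul, smul_smul, ← qpow_add, neg_add_eq_sub]

variable {s l : ℕ} {r' : ZMod S.n}

lemma isBandFin (he : IsTwistEquiv r e) {η : k} (hY : S.IsBandFin s l r' η Y) :
    S.IsBandFin s l (r + r') η Z := by
  obtain ⟨w, hwa, hwd, hwb, hwc⟩ := hY
  refine ⟨w.map e, fun p => ?_, fun p => ?_, fun p => ?_, fun p => ?_⟩
  · rw [Module.Basis.map_apply, he.a_smul, hwa, fe2_basis_map]
  · rw [Module.Basis.map_apply, he.d_smul, hwd]
    split_ifs <;> simp only [map_add, map_smul, map_zero, fe2_basis_map]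
  · rw [Module.Basis.map_apply, he.b_smul_of_eq (hwb p)]
    simp only [add_assoc]
  · rw [Module.Basis.map_apply, he.c_smul_of_eq (hwc p), sub_sub, add_comm r']

lemma isBandInf (he : IsTwistEquiv r e) (hY : S.IsBandInf s l r' Y) :
    S.IsBandInf s l (r + r') Z := by
  obtain ⟨w, hwa, hwd, hwb, hwc⟩ := hY
  refine ⟨w.map e, fun p => ?_, fun p => ?_, fun p => ?_, fun p => ?_⟩
  · rw [Module.Basis.map_apply, he.a_smul, hwa]
    split_ifs <;> simp only [map_zero, fe2_basis_map]
  · rw [Module.Basis.map_apply, he.d_smul, hwd]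
    split_ifs <;> simp only [map_smul, fe2_basis_map]
  · rw [Module.Basis.map_apply, he.b_smul_of_eq (hwb p)]
    simp only [add_assoc]
  · rw [Module.Basis.map_apply, he.c_smul_of_eq (hwc p), sub_sub, add_comm r']

lemma isBand (he : IsTwistEquiv r e) {η : WithTop k} (hY : S.IsBand s l r' η Y) :
    S.IsBand s l (r + r') η Z := by
  induction η using WithTop.recTopCoe with
  | top => exact he.isBandInf hY
  | coe η => exact he.isBandFin hY

end IsTwistEquiv

lemma IsV.exists_isTwistEquiv_tens {r : ZMod S.n} {X : SMod S} (hX : S.IsV 1 r X)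
    (Y : SMod S) : ∃ e : Y.carrier ≃ₗ[k] (X.tens Y).carrier, IsTwistEquiv r e := by
  obtain ⟨v, hva, hvd, hvb, hvc⟩ := hX
  have hv_a : S.a • v 0 = 0 := by simpa [fe] using hva 0
  have hv_d : S.d • v 0 = 0 := by simpa [fe, alphaq, qint] using hvd 0
  have hv_b : S.b • v 0 = S.qpow r • v 0 := by simpa using hvb 0
  have hv_c : S.c • v 0 = S.qpow (-r) • v 0 := by simpa using hvc 0
  exact ⟨tensLeftEquiv v Y,
    ⟨smul_tensLeftEquiv_of_comul_eq_add S.comul_a hv_a,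
      smul_tensLeftEquiv_of_comul_eq_add S.comul_d hv_d,
      smul_tensLeftEquiv_of_comul_eq_tmul S.comul_b hv_b,
      smul_tensLeftEquiv_of_comul_eq_tmul S.comul_c hv_c⟩⟩

end TaftDouble

theorem statement7_general (k : Type) [Field k] (S : TaftDouble k)
    (l : ℕ) (r r' : ZMod S.n)
    (η : WithTop k) (s : ℕ)
    (X Y : SMod S) (hX : S.IsV 1 r X) (hY : S.IsBand s l r' η Y) :
    S.IsBand s l (r + r') η (X.tens Y) := by
  obtain ⟨e, he⟩ := hX.exists_isTwistEquiv_tens Y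
  exact he.isBand hY

/-- Lemma 3.8: `V(1,r) ⊗ M_s(l,r',η) ≅ M_s(l, r+r', η)`. -/
theorem statement7 (k : Type) [Field k] [IsAlgClosed k] (S : TaftDouble k)
    (l : ℕ) (r r' : ZMod S.n) (hl : 1 ≤ l) (hln : l < S.n)
    (η : WithTop k) (s : ℕ) (hs : 1 ≤ s)
    (X Y : SMod S) (hX : S.IsV 1 r X) (hY : S.IsBand s l r' η Y) :
    S.IsBand s l (r + r') η (X.tens Y) :=
  statement7_general k S l r r' η s X Y hX hY
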